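/- For a morphism (A, K) → (B, L) of pairs, the composite I = (−)^𝔨 ∘ I_w ∘ J, where J is the inclusion of (A, K)-modules into weak (A, K)-modules, I_w is the right adjoint of the weak forgetful functor from weak (B, L)-modules to weak (A, K)-modules, and (−)^𝔨 is the right adjoint of the inclusion of (B, L)-modules into weak (B, L)-modules, is right adjoint to the forgetful functor from (B, L)-modules to (A, K)-modules. -/

import Mathlib

/-!
STATEMENT 10: For a morphism `(A, K) → (B, L)` of pairs, the composite
`I = (−)^𝔨 ∘ I_w ∘ J` — where `J` is the inclusion of `(A, K)`-modules into
weak `(A, K)`-modules, `I_w` is the right adjoint of the weak forgetful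
functor from weak `(B, L)`-modules to weak `(A, K)`-modules, and `(−)^𝔨` is
the right adjoint of the inclusion of `(B, L)`-modules into weak
`(B, L)`-modules — is right adjoint to the forgetful functor from
`(B, L)`-modules to `(A, K)`-modules.

Formalization: see the file for statement 7 for the modeling of pairs and
(weak) modules.  A morphism of pairs consists of a group-side morphism
(`GroupHom`: group homomorphism and equivariant Lie algebra homomorphism) and
a compatible equivariant algebra homomorphism (`PairHom`).  The statement
quantifies over any right adjoint `I_w` of the weak forgetful functor and any
right adjoint `(−)^𝔨` of the inclusion, and asserts the adjunction
`F ⊣ J ⋙ I_w ⋙ (−)^𝔨` for the restricted forgetful functor `F`.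
-/

open CategoryTheory
set_option synthInstance.maxHeartbeats 1000000
set_option maxHeartbeats 1600000

variable (k : Type) [CommRing k]

structure GroupData where
  G : Type
  [grp : Group G]
  L : Type
  [addL : AddCommGroup L]
  [modL : Module k L]
  [lieL : LieRing L]
  [lieAlgL : LieAlgebra k L]
  Ad : G →* (L ≃ₗ[k] L)
  ad_bracket : ∀ (g : G) (x y : L), Ad g ⁅x, y⁆ = ⁅Ad g x, Ad g y⁆

attribute [instance] GroupData.grp GroupData.addL GroupData.modL GroupData.lieL GroupData.lieAlgL

variable {k}

structure WeakPair (D : GroupData k) where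
  A : Type
  [ringA : Ring A]
  [algA : Algebra k A]
  φ : D.G →* (A ≃ₐ[k] A)
  dφ : D.L →ₗ[k] (A →ₗ[k] A)
  dφ_lie : ∀ x y : D.L, dφ ⁅x, y⁆ = dφ x ∘ₗ dφ y - dφ y ∘ₗ dφ x
  dφ_der : ∀ (ξ : D.L) (a b : A), dφ ξ (a * b) = dφ ξ a * b + a * dφ ξ b
  dφ_equiv : ∀ (g : D.G) (ξ : D.L) (a : A), φ g (dφ ξ a) = dφ (D.Ad g ξ) (φ g a)

attribute [instance] WeakPair.ringA WeakPair.algA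

structure HCPair (D : GroupData k) extends WeakPair D where
  ψ : D.L →ₗ[k] A
  ψ_bracket : ∀ x y : D.L, ψ ⁅x, y⁆ = ψ x * ψ y - ψ y * ψ x
  ψ_equiv : ∀ (g : D.G) (ξ : D.L), φ g (ψ ξ) = ψ (D.Ad g ξ)
  dφ_eq : ∀ (ξ : D.L) (a : A), dφ ξ a = ψ ξ * a - a * ψ ξ

variable {D : GroupData k}

structure WeakMod (P : WeakPair D) where
  M : CochainComplex (ModuleCat.{0} k) ℤ
  π : P.A →ₐ[k] End M
  ν : D.G →* (End M)ˣ
  dν : D.L →ₗ[k] End M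
  dν_lie : ∀ x y : D.L, dν ⁅x, y⁆ = dν x * dν y - dν y * dν x
  π_equiv : ∀ (g : D.G) (a : P.A), (ν g : End M) * π a = π (P.φ g a) * (ν g : End M)
  dν_equiv : ∀ (g : D.G) (ξ : D.L), (ν g : End M) * dν ξ = dν (D.Ad g ξ) * (ν g : End M)
  dν_π : ∀ (ξ : D.L) (a : P.A), dν ξ * π a = π (P.dφ ξ a) + π a * dν ξ

namespace WeakMod

variable {P : WeakPair D}

@[ext]
structure Hom (V W : WeakMod P) where
  hom : V.M ⟶ W.M
  comm_π : ∀ a : P.A, (V.π a : V.M ⟶ V.M) ≫ hom = hom ≫ (W.π a : W.M ⟶ W.M)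
  comm_ν : ∀ g : D.G, ((V.ν g : End V.M) : V.M ⟶ V.M) ≫ hom
    = hom ≫ ((W.ν g : End W.M) : W.M ⟶ W.M)
  comm_dν : ∀ ξ : D.L, (V.dν ξ : V.M ⟶ V.M) ≫ hom = hom ≫ (W.dν ξ : W.M ⟶ W.M)

instance : Category (WeakMod P) where
  Hom := Hom
  id V := ⟨𝟙 V.M, by simp, by simp, by simp⟩
  comp f g := ⟨f.hom ≫ g.hom,
    fun a => by rw [← Category.assoc, f.comm_π, Category.assoc, g.comm_π, Category.assoc],
    fun a => by rw [← Category.assoc, f.comm_ν, Category.assoc, g.comm_ν, Category.assoc],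
    fun a => by rw [← Category.assoc, f.comm_dν, Category.assoc, g.comm_dν, Category.assoc]⟩
  id_comp f := Hom.ext (by simp)
  comp_id f := Hom.ext (by simp)
  assoc f g h := Hom.ext (by simp)

/-- The forgetful functor to cochain complexes of `k`-modules. -/
def forgetToComplex (P : WeakPair D) : WeakMod P ⥤ CochainComplex (ModuleCat.{0} k) ℤ where
  obj V := V.M
  map f := f.hom

end WeakMod

/-- An `(A,K)`-module is a weak `(A,K)`-module on which the two actions of `𝔨`
agree: `dν(ξ) = π(ψ(ξ))`. -/
def IsStrict (P : HCPair D) (V : WeakMod P.toWeakPair) : Prop :=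
  ∀ ξ : D.L, V.dν ξ = V.π (P.ψ ξ)


/-- A morphism of the group-side data: a group homomorphism together with a
compatible homomorphism of Lie algebras (the differential). -/
structure GroupHom (D E : GroupData k) where
  fg : D.G →* E.G
  fl : D.L →ₗ[k] E.L
  fl_bracket : ∀ x y : D.L, fl ⁅x, y⁆ = ⁅fl x, fl y⁆
  fl_ad : ∀ (g : D.G) (ξ : D.L), fl (D.Ad g ξ) = E.Ad (fg g) (fl ξ)

variable {E : GroupData k} {P : HCPair D} {Q : HCPair E}

/-- A morphism of pairs `(A, K) → (B, L)`. -/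
structure PairHom (P : HCPair D) (Q : HCPair E) where
  fk : GroupHom D E
  fa : P.A →ₐ[k] Q.A
  equiv_φ : ∀ (g : D.G) (a : P.A), fa (P.φ g a) = Q.φ (fk.fg g) (fa a)
  comm_ψ : ∀ ξ : D.L, fa (P.ψ ξ) = Q.ψ (fk.fl ξ)

/-- The forgetful functor on weak modules along a morphism of pairs. -/
def PairHom.restrictWeak (f : PairHom P Q) :
    WeakMod Q.toWeakPair ⥤ WeakMod P.toWeakPair where
  obj V :=
    { M := V.M
      π := V.π.comp f.fa
      ν := V.ν.comp f.fk.fg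
      dν := V.dν ∘ₗ f.fk.fl
      dν_lie := fun x y => by
        simp only [LinearMap.comp_apply, f.fk.fl_bracket]
        exact V.dν_lie _ _
      π_equiv := fun g a => by
        simp only [AlgHom.comp_apply, MonoidHom.comp_apply, f.equiv_φ]
        exact V.π_equiv _ _
      dν_equiv := fun g ξ => by
        simp only [LinearMap.comp_apply, MonoidHom.comp_apply, f.fk.fl_ad]
        exact V.dν_equiv _ _
      dν_π := fun ξ a => by
        have h : f.fa (P.dφ ξ a) = Q.dφ (f.fk.fl ξ) (f.fa a) := by
          rw [P.dφ_eq, Q.dφ_eq]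
          simp [map_sub, map_mul, f.comm_ψ]
        simp only [AlgHom.comp_apply, LinearMap.comp_apply, h]
        exact V.dν_π _ _ }
  map φf :=
    { hom := φf.hom
      comm_π := fun a => φf.comm_π (f.fa a)
      comm_ν := fun g => φf.comm_ν (f.fk.fg g)
      comm_dν := fun ξ => φf.comm_dν (f.fk.fl ξ) }
  map_id V := rfl
  map_comp φf φg := rfl

/-- The forgetful functor restricted to the subcategories of non-weak
modules. -/
def PairHom.restrict (f : PairHom P Q) :
    ObjectProperty.FullSubcategory (IsStrict Q) ⥤ ObjectProperty.FullSubcategory (IsStrict P) :=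
  ObjectProperty.lift _ (ObjectProperty.ι (IsStrict Q) ⋙ f.restrictWeak)
    (fun V ξ => by
      show V.obj.dν (f.fk.fl ξ) = V.obj.π (f.fa (P.ψ ξ))
      rw [f.comm_ψ]
      exact V.property _)

/-!
The strict forgetful functor `F` is the weak one `F_w` restricted along the full inclusions `J`,
so `F ⋙ J ≅ J ⋙ F_w`. Composing `J ⊣ (−)^𝔨` with `F_w ⊣ I_w` gives `J ⋙ F_w ⊣ I_w ⋙ (−)^𝔨`,
and an adjunction restricts along fully faithful functors that commute with both adjoints; here
we restrict the target category along `J`.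
-/

def PairHom.restrictCompιIso (f : PairHom P Q) :
    f.restrict ⋙ ObjectProperty.ι (IsStrict P) ≅ ObjectProperty.ι (IsStrict Q) ⋙ f.restrictWeak :=
  ObjectProperty.liftCompιIso _ _ _

/-- `I = (−)^𝔨 ∘ I_w ∘ J` is right adjoint to the forgetful
functor between the categories of non-weak modules. -/
theorem zuckerman_adjunction (f : PairHom P Q)
    (Iw : WeakMod P.toWeakPair ⥤ WeakMod Q.toWeakPair)
    (adj_w : f.restrictWeak ⊣ Iw)
    (inv : WeakMod Q.toWeakPair ⥤ ObjectProperty.FullSubcategory (IsStrict Q))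
    (adj_inv : ObjectProperty.ι (IsStrict Q) ⊣ inv) :
    Nonempty (f.restrict ⊣ ObjectProperty.ι (IsStrict P) ⋙ Iw ⋙ inv) :=
  ⟨(adj_inv.comp adj_w).restrictFullyFaithful (Functor.FullyFaithful.id _)
    (ObjectProperty.fullyFaithfulι _) (Functor.leftUnitor _ ≪≫ f.restrictCompιIso.symm)
    (Functor.rightUnitor _).symm⟩
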